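/- Let Λ be a finite 2-graph with exactly three vertices u, v, w such that |uΛ^{e_1}u| = d_1, |uΛ^{e_2}u| = d_2, |uΛ^{e_1}v| = a_1, |uΛ^{e_2}v| = a_2, |uΛ^{e_1}w| = b_1, |vΛ^{e_2}w| = b_2 with all these numbers ≥ 1, and all other edge sets xΛ^{e_i}y empty (in particular vΛ^{e_1} = ∅ and wΛ^{e_1} = wΛ^{e_2} = ∅). Let r = (r_1, r_2) ∈ (0,∞)² and β > 0 satisfy βr_i > ln d_i for i = 1, 2, and set Δ := (1 - d_1 e^{-βr_1})(1 - d_2 e^{-βr_2}). Then the series y_w := ∑_{μ ∈ Λw} e^{-βr·d(μ)} (over all paths with source w) converges and y_w = 1 + b_2 e^{-βr_2} + b_1 e^{-βr_1} Δ^{-1} + a_2 b_2 e^{-2βr_2}(1 - d_2 e^{-βr_2})^{-1}. -/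

import Mathlib

/-- A `k`-graph: a countable small category `Λ` together with a degree functor
`d : Λ → ℕ^k` satisfying the unique factorisation property.  A morphism in
`Hom u v` is a path with range `u` and source `v` (so `Hom u v = uΛv`), and
`comp μ ν = μν` is defined when `s(μ) = r(ν)`. -/
structure KGraph (k : ℕ) where
  Obj : Type
  Hom : Obj → Obj → Type
  id : ∀ v : Obj, Hom v v
  comp : ∀ {u v w : Obj}, Hom u v → Hom v w → Hom u w
  id_comp : ∀ {u v : Obj} (f : Hom u v), comp (id u) f = f
  comp_id : ∀ {u v : Obj} (f : Hom u v), comp f (id v) = f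
  assoc : ∀ {u v w x : Obj} (f : Hom u v) (g : Hom v w) (h : Hom w x),
    comp (comp f g) h = comp f (comp g h)
  countable : Countable (Σ u : Obj, Σ v : Obj, Hom u v)
  deg : ∀ {u v : Obj}, Hom u v → Fin k → ℕ
  deg_id : ∀ v : Obj, deg (id v) = 0
  deg_comp : ∀ {u v w : Obj} (f : Hom u v) (g : Hom v w),
    deg (comp f g) = deg f + deg g
  factor : ∀ {u v : Obj} (f : Hom u v) (m n : Fin k → ℕ), deg f = m + n →
    ∃! p : Σ w : Obj, Hom u w × Hom w v,
      deg p.2.1 = m ∧ deg p.2.2 = n ∧ comp p.2.1 p.2.2 = f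

namespace KGraph

variable {k : ℕ}

/-- Paths with range `u`: the set `uΛ`. -/
abbrev PathFrom (Λ : KGraph k) (u : Λ.Obj) : Type := Σ v : Λ.Obj, Λ.Hom u v

/-- Paths with source `u`: the set `Λu`. -/
abbrev PathTo (Λ : KGraph k) (u : Λ.Obj) : Type := Σ v : Λ.Obj, Λ.Hom v u

/-- All paths of `Λ`. -/
abbrev Path (Λ : KGraph k) : Type := Σ u : Λ.Obj, Σ v : Λ.Obj, Λ.Hom u v

/-- `Λ` is finite if `Λ^n` is finite for every `n ∈ ℕ^k`. -/
def IsFinite (Λ : KGraph k) : Prop :=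
  ∀ n : Fin k → ℕ, {p : Λ.Path | Λ.deg p.2.2 = n}.Finite

/-- The standard generator `e_i` of `ℕ^k`. -/
def gen (k : ℕ) (i : Fin k) : Fin k → ℕ := Pi.single i 1

/-- The set of edges with range `u`: `uΛ^1 = ⋃ᵢ uΛ^{eᵢ}`. -/
def edges (Λ : KGraph k) (u : Λ.Obj) : Set (Λ.PathFrom u) :=
  {e | ∃ i : Fin k, Λ.deg e.2 = gen k i}

/-- The set `Λ^min(μ,ν)` of minimal common extensions of `μ` and `ν`:
pairs `(α, β)` with `μα = νβ` and `d(μα) = d(μ) ∨ d(ν)`. -/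
def MCE (Λ : KGraph k) {u a b : Λ.Obj} (μ : Λ.Hom u a) (ν : Λ.Hom u b) :
    Set (Σ x : Λ.Obj, Λ.Hom a x × Λ.Hom b x) :=
  {p | Λ.comp μ p.2.1 = Λ.comp ν p.2.2 ∧
    Λ.deg (Λ.comp μ p.2.1) = Λ.deg μ ⊔ Λ.deg ν}

/-- `E` is a finite exhaustive subset of `uΛ^1`: for every `μ ∈ uΛ` there is
`e ∈ E` with `Λ^min(μ,e) ≠ ∅`. -/
def IsExhaustive (Λ : KGraph k) (u : Λ.Obj) (E : Set (Λ.PathFrom u)) : Prop :=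
  E ⊆ Λ.edges u ∧ E.Finite ∧
    ∀ μ : Λ.PathFrom u, ∃ e ∈ E, (Λ.MCE μ.2 e.2).Nonempty

/-- `v` is an absolute source: `vΛ^{eᵢ} = ∅` for all `i`. -/
def IsAbsoluteSource (Λ : KGraph k) (v : Λ.Obj) : Prop :=
  ∀ (w : Λ.Obj) (f : Λ.Hom v w) (i : Fin k), Λ.deg f ≠ gen k i

end KGraph

/-! Apart from the vertex `w`, a path ending at `w` is either a single edge `v → w` (every edge
leaving `v` ends at `w`, and no edge leaves `w`) or starts at `u`. A path `u → w` of degree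
`(m, n)` has a unique last edge of degree `e₁` if `m ≥ 1` and of degree `e₂` if `m = 0`; it enters
`w` from `u`, respectively from `v`. Hence there are `d₁^(m-1) d₂^n b₁` such paths when `m ≥ 1`,
`d₂^(n-2) a₂ b₂` when `m = 0` and `n ≥ 2`, and none otherwise. Weighted by `e^{-βr·(m,n)}` these
counts form geometric series with ratios `dᵢe^{-βrᵢ} < 1`. -/

theorem hasSum_sigma_of_nonneg {ι : Type*} {γ : ι → Type*} {f : (Σ i, γ i) → ℝ} (hf : 0 ≤ f)
    {g : ι → ℝ} {a : ℝ} (hfib : ∀ i, HasSum (fun c => f ⟨i, c⟩) (g i)) (hg : HasSum g a) :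
    HasSum f a :=
  hg.sigma_of_hasSum hfib <| (summable_sigma_of_nonneg hf).2
    ⟨fun i => (hfib i).summable, by simpa only [fun i => (hfib i).tsum_eq] using hg.summable⟩

theorem hasSum_prod_of_nonneg {α β : Type*} {f : α × β → ℝ} (hf : 0 ≤ f) {g : α → ℝ} {a : ℝ}
    (hrow : ∀ m, HasSum (fun n => f (m, n)) (g m)) (hg : HasSum g a) : HasSum f a :=
  (Equiv.sigmaEquivProd α β).hasSum_iff.mp <|
    hasSum_sigma_of_nonneg (fun _ => hf _) hrow hg

theorem hasSum_sigma_of_three_indices {ι : Type*} {γ : ι → Type*} {f : (Σ i, γ i) → ℝ}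
    (hf : 0 ≤ f) {u v w : ι} (huv : u ≠ v) (huw : u ≠ w) (hvw : v ≠ w)
    (hall : ∀ x, x = u ∨ x = v ∨ x = w) {a b c : ℝ} (hu : HasSum (fun t => f ⟨u, t⟩) a)
    (hv : HasSum (fun t => f ⟨v, t⟩) b) (hw : HasSum (fun t => f ⟨w, t⟩) c) :
    HasSum f (a + b + c) := by
  classical
  have hfib : ∀ i, HasSum (fun t => f ⟨i, t⟩) (∑' t, f ⟨i, t⟩) := fun i => by
    rcases hall i with rfl | rfl | rfl
    exacts [hu.summable.hasSum, hv.summable.hasSum, hw.summable.hasSum]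
  refine hasSum_sigma_of_nonneg hf hfib ?_
  have hsum : HasSum (fun i => ∑' t, f ⟨i, t⟩) (∑ i ∈ {u, v, w}, ∑' t, f ⟨i, t⟩) :=
    hasSum_sum_of_ne_finset_zero fun i hi =>
      absurd (by rcases hall i with rfl | rfl | rfl <;> simp) hi
  rwa [Finset.sum_insert (by simp [huv, huw]), Finset.sum_pair hvw, hu.tsum_eq, hv.tsum_eq,
    hw.tsum_eq, ← add_assoc] at hsum

theorem hasSum_comp_of_hasSum_card_mul {α β : Type*} {φ : α → β} {g : β → ℝ} {a : ℝ}
    (hfin : ∀ b, Finite {x // φ x = b}) (hg : 0 ≤ g)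
    (h : HasSum (fun b => (Nat.card {x // φ x = b} : ℝ) * g b) a) : HasSum (g ∘ φ) a := by
  refine (Equiv.sigmaFiberEquiv φ).hasSum_iff.mp <|
    hasSum_sigma_of_nonneg (fun _ => hg _) (fun b => ?_) h
  have := Fintype.ofFinite {x // φ x = b}
  convert hasSum_fintype (fun _ : {x // φ x = b} => g b) using 1
  · funext c
    simp [c.2]
  · simp [Nat.card_eq_fintype_card]

theorem hasSum_of_rows_geometric {f : ℕ × ℕ → ℝ} (hf : 0 ≤ f) {A B x y : ℝ}
    (hx₀ : 0 ≤ x) (hx : x < 1) (hy₀ : 0 ≤ y) (hy : y < 1)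
    (hsucc : ∀ m n, f (m + 1, n) = A * x ^ m * y ^ n)
    (h00 : f (0, 0) = 0) (h01 : f (0, 1) = 0) (h0 : ∀ n, f (0, n + 2) = B * y ^ n) :
    HasSum f (A * ((1 - x) * (1 - y))⁻¹ + B * (1 - y)⁻¹) := by
  have geo_y := hasSum_geometric_of_lt_one hy₀ hy
  have row_succ : ∀ m, HasSum (fun n => f (m + 1, n)) (A * x ^ m * (1 - y)⁻¹) := fun m => by
    simpa only [hsucc, mul_assoc] using geo_y.mul_left (A * x ^ m)
  have row_zero : HasSum (fun n => f (0, n)) (B * (1 - y)⁻¹) := by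
    have := (hasSum_nat_add_iff (f := fun n => f (0, n)) 2).mp (by
      simpa only [h0] using geo_y.mul_left B)
    simpa [Finset.sum_range_succ, h00, h01] using this
  have hrow : ∀ m, HasSum (fun n => f (m, n)) (∑' n, f (m, n)) := by
    rintro (_ | m)
    exacts [row_zero.summable.hasSum, (row_succ m).summable.hasSum]
  refine hasSum_prod_of_nonneg hf hrow ?_
  have hcol := (hasSum_nat_add_iff (f := fun m => ∑' n, f (m, n)) 1).mp <| by
    simpa only [(row_succ _).tsum_eq] using
      ((hasSum_geometric_of_lt_one hx₀ hx).mul_left A).mul_right (1 - y)⁻¹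
  rw [Finset.sum_range_one, row_zero.tsum_eq] at hcol
  rwa [mul_inv, ← mul_assoc]

theorem Real.mul_exp_neg_lt_one_of_log_lt {d x : ℝ} (hd : 0 ≤ d) (h : Real.log d < x) :
    d * Real.exp (-x) < 1 := by
  rcases hd.eq_or_lt with rfl | hd
  · simp
  calc d * Real.exp (-x) < Real.exp x * Real.exp (-x) :=
        mul_lt_mul_of_pos_right ((Real.log_lt_iff_lt_exp hd).mp h) (Real.exp_pos _)
    _ = 1 := by rw [← Real.exp_add, add_neg_cancel, Real.exp_zero]

namespace KGraph

section

variable {k : ℕ} (Λ : KGraph k)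

noncomputable def numPaths (x y : Λ.Obj) (n : Fin k → ℕ) : ℕ :=
  Nat.card {f : Λ.Hom x y // Λ.deg f = n}

theorem numPaths_eq_ncard (x y : Λ.Obj) (n : Fin k → ℕ) :
    Λ.numPaths x y n = {f : Λ.Hom x y | Λ.deg f = n}.ncard :=
  Nat.card_coe_set_eq _

theorem factor_unique {x y₁ y₂ z : Λ.Obj} {e₁ : Λ.Hom x y₁} {g₁ : Λ.Hom y₁ z}
    {e₂ : Λ.Hom x y₂} {g₂ : Λ.Hom y₂ z} (he : Λ.deg e₁ = Λ.deg e₂) (hg : Λ.deg g₁ = Λ.deg g₂)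
    (h : Λ.comp e₁ g₁ = Λ.comp e₂ g₂) :
    (⟨y₁, e₁, g₁⟩ : Σ y, Λ.Hom x y × Λ.Hom y z) = ⟨y₂, e₂, g₂⟩ :=
  (Λ.factor _ _ _ (Λ.deg_comp e₁ g₁)).unique ⟨rfl, rfl, rfl⟩ ⟨he.symm, hg.symm, h.symm⟩

theorem sigma_id_eq_of_deg_eq_zero {x y : Λ.Obj} {f : Λ.Hom x y} (hf : Λ.deg f = 0) :
    (⟨x, Λ.id x, f⟩ : Σ z, Λ.Hom x z × Λ.Hom z y) = ⟨y, f, Λ.id y⟩ :=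
  Λ.factor_unique (by rw [Λ.deg_id, hf]) (by rw [Λ.deg_id, hf])
    (by rw [Λ.id_comp, Λ.comp_id])

theorem eq_of_deg_eq_zero {x y : Λ.Obj} {f : Λ.Hom x y} (hf : Λ.deg f = 0) : x = y :=
  congrArg Sigma.fst (Λ.sigma_id_eq_of_deg_eq_zero hf)

theorem eq_id_of_deg_eq_zero {x : Λ.Obj} {f : Λ.Hom x x} (hf : Λ.deg f = 0) : f = Λ.id x :=
  (congrArg Prod.fst (sigma_mk_injective (β := fun z => Λ.Hom x z × Λ.Hom z x)
    (Λ.sigma_id_eq_of_deg_eq_zero hf))).symm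

theorem exists_edge_comp {x y : Λ.Obj} (f : Λ.Hom x y) {i : Fin k} (hi : Λ.deg f i ≠ 0) :
    ∃ (z : Λ.Obj) (e : Λ.Hom x z) (g : Λ.Hom z y), Λ.deg e = gen k i ∧ Λ.comp e g = f := by
  obtain ⟨⟨z, e, g⟩, ⟨he, -, hf⟩, -⟩ := Λ.factor f (gen k i) (Λ.deg f - gen k i) <| by
    funext j
    by_cases hj : j = i
    · subst hj
      simp only [gen, Pi.add_apply, Pi.single_eq_same, Pi.sub_apply]
      omega
    · simp [gen, hj]
  exact ⟨z, e, g, he, hf⟩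

theorem IsAbsoluteSource.deg_eq_zero {Λ : KGraph k} {w y : Λ.Obj} (hw : Λ.IsAbsoluteSource w)
    (f : Λ.Hom w y) : Λ.deg f = 0 := by
  by_contra hf
  obtain ⟨i, hi⟩ := Function.ne_iff.mp hf
  obtain ⟨z, e, -, he, -⟩ := Λ.exists_edge_comp f hi
  exact hw z e i he

theorem numPaths_self_zero (x : Λ.Obj) : Λ.numPaths x x 0 = 1 :=
  Nat.card_eq_one_iff_exists.mpr ⟨⟨Λ.id x, Λ.deg_id x⟩, fun f =>
    Subtype.ext (Λ.eq_id_of_deg_eq_zero f.2)⟩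

theorem numPaths_zero_of_ne {x y : Λ.Obj} (hxy : x ≠ y) : Λ.numPaths x y 0 = 0 :=
  Nat.card_eq_zero.mpr <| Or.inl ⟨fun f => hxy (Λ.eq_of_deg_eq_zero f.2)⟩

theorem numPaths_add {x y₀ z : Λ.Obj} {m n : Fin k → ℕ}
    (hmid : ∀ y (e : Λ.Hom x y) (g : Λ.Hom y z), Λ.deg e = m → Λ.deg g = n → y = y₀) :
    Λ.numPaths x z (m + n) = Λ.numPaths x y₀ m * Λ.numPaths y₀ z n := by
  rw [numPaths, numPaths, numPaths, ← Nat.card_prod]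
  symm
  refine Nat.card_congr <| Equiv.ofBijective
    (fun p => ⟨Λ.comp p.1.1 p.2.1, by rw [Λ.deg_comp, p.1.2, p.2.2]⟩) ⟨?_, ?_⟩
  · rintro ⟨⟨e₁, he₁⟩, ⟨g₁, hg₁⟩⟩ ⟨⟨e₂, he₂⟩, ⟨g₂, hg₂⟩⟩ h
    have := sigma_mk_injective <| Λ.factor_unique (he₁.trans he₂.symm) (hg₁.trans hg₂.symm)
      (congrArg Subtype.val h)
    simp_all
  · rintro ⟨f, hf⟩
    obtain ⟨⟨y, e, g⟩, ⟨he, hg, rfl⟩, -⟩ := Λ.factor f m n hf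
    obtain rfl := hmid y e g he hg
    exact ⟨(⟨e, he⟩, ⟨g, hg⟩), rfl⟩

theorem numPaths_add_gen {x y₀ z : Λ.Obj} (m : Fin k → ℕ) {i : Fin k}
    (hsrc : ∀ y (g : Λ.Hom y z), Λ.deg g = gen k i → y = y₀) :
    Λ.numPaths x z (m + gen k i) = Λ.numPaths x y₀ m * Λ.numPaths y₀ z (gen k i) :=
  Λ.numPaths_add fun y _ g _ hg => hsrc y g hg

theorem hasSum_deg_of_hasSum_numPaths {Λ : KGraph k} (hΛ : Λ.IsFinite) {x y : Λ.Obj}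
    {g : (Fin k → ℕ) → ℝ} (hg : 0 ≤ g) {a : ℝ}
    (h : HasSum (fun n => (Λ.numPaths x y n : ℝ) * g n) a) :
    HasSum (fun f : Λ.Hom x y => g (Λ.deg f)) a := by
  refine hasSum_comp_of_hasSum_card_mul (fun n => ?_) hg h
  have := (hΛ n).to_subtype
  exact Finite.of_injective (fun f => (⟨⟨x, y, f.1⟩, f.2⟩ : {p : Λ.Path | Λ.deg p.2.2 = n}))
    fun f g hfg => by simpa [Subtype.ext_iff] using hfg

theorem hasSum_deg_of_forall_deg_eq {Λ : KGraph k} (hΛ : Λ.IsFinite) {x y : Λ.Obj}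
    {g : (Fin k → ℕ) → ℝ} (hg : 0 ≤ g) {n₀ : Fin k → ℕ} (hdeg : ∀ f : Λ.Hom x y, Λ.deg f = n₀) :
    HasSum (fun f : Λ.Hom x y => g (Λ.deg f)) (Λ.numPaths x y n₀ * g n₀) := by
  refine hasSum_deg_of_hasSum_numPaths hΛ hg (hasSum_single n₀ fun n hn => ?_)
  rw [numPaths, Nat.card_eq_zero.mpr (Or.inl ⟨fun f => hn (f.2.symm.trans (hdeg f.1))⟩),
    Nat.cast_zero, zero_mul]

end

theorem vec_zero_zero : (![0, 0] : Fin 2 → ℕ) = 0 := by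
  funext i; fin_cases i <;> rfl

theorem vec_add_gen_zero (m n : ℕ) : ![m, n] + gen 2 0 = ![m + 1, n] := by
  funext i; fin_cases i <;> simp [gen]

theorem vec_add_gen_one (m n : ℕ) : ![m, n] + gen 2 1 = ![m, n + 1] := by
  funext i; fin_cases i <;> simp [gen]

def HasThreeVertexSkeleton (Λ : KGraph 2) (u v w : Λ.Obj) : Prop :=
  ∀ (x y : Λ.Obj) (i : Fin 2) (f : Λ.Hom x y), Λ.deg f = gen 2 i →
    (x = u ∧ y = u) ∨ (x = u ∧ y = v) ∨ (x = u ∧ y = w ∧ i = 0) ∨ (x = v ∧ y = w ∧ i = 1)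

namespace HasThreeVertexSkeleton

variable {Λ : KGraph 2} {u v w : Λ.Obj}

theorem eq_of_edge_to_u (h : Λ.HasThreeVertexSkeleton u v w) (huw : u ≠ w) {i : Fin 2}
    (y : Λ.Obj) (g : Λ.Hom y u) (hg : Λ.deg g = gen 2 i) : y = u := by
  rcases h y u i g hg with ⟨hy, -⟩ | ⟨hy, -⟩ | ⟨hy, -⟩ | ⟨-, hu, -⟩
  exacts [hy, hy, hy, absurd hu huw]

theorem eq_of_edge_to_v (h : Λ.HasThreeVertexSkeleton u v w) (hvw : v ≠ w) {i : Fin 2}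
    (y : Λ.Obj) (g : Λ.Hom y v) (hg : Λ.deg g = gen 2 i) : y = u := by
  rcases h y v i g hg with ⟨hy, -⟩ | ⟨hy, -⟩ | ⟨hy, -⟩ | ⟨-, hv, -⟩
  exacts [hy, hy, hy, absurd hv hvw]

theorem eq_of_edge_zero_to_w (h : Λ.HasThreeVertexSkeleton u v w)
    (y : Λ.Obj) (g : Λ.Hom y w) (hg : Λ.deg g = gen 2 0) : y = u := by
  rcases h y w 0 g hg with ⟨hy, -⟩ | ⟨hy, -⟩ | ⟨hy, -⟩ | ⟨-, -, hi⟩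
  exacts [hy, hy, hy, absurd hi (by decide)]

theorem eq_of_edge_one_to_w (h : Λ.HasThreeVertexSkeleton u v w) (huw : u ≠ w) (hvw : v ≠ w)
    (y : Λ.Obj) (g : Λ.Hom y w) (hg : Λ.deg g = gen 2 1) : y = v := by
  rcases h y w 1 g hg with ⟨-, hw⟩ | ⟨-, hw⟩ | ⟨-, -, hi⟩ | ⟨hy, -⟩
  exacts [absurd hw.symm huw, absurd hw.symm hvw, absurd hi (by decide), hy]

theorem isAbsoluteSource (h : Λ.HasThreeVertexSkeleton u v w) (huw : u ≠ w) (hvw : v ≠ w) :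
    Λ.IsAbsoluteSource w := by
  intro z e i he
  rcases h w z i e he with ⟨hw, -⟩ | ⟨hw, -⟩ | ⟨hw, -⟩ | ⟨hw, -⟩
  exacts [huw hw.symm, huw hw.symm, huw hw.symm, hvw hw.symm]

theorem deg_eq_of_hom_v_w (h : Λ.HasThreeVertexSkeleton u v w) (huv : u ≠ v) (huw : u ≠ w)
    (hvw : v ≠ w) (f : Λ.Hom v w) : Λ.deg f = gen 2 1 := by
  obtain ⟨i, hi⟩ := Function.ne_iff.mp fun hf => hvw (Λ.eq_of_deg_eq_zero hf)
  obtain ⟨z, e, g, he, rfl⟩ := Λ.exists_edge_comp f hi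
  rcases h v z i e he with ⟨hv, -⟩ | ⟨hv, -⟩ | ⟨hv, -⟩ | ⟨-, rfl, rfl⟩
  · exact absurd hv.symm huv
  · exact absurd hv.symm huv
  · exact absurd hv.symm huv
  · rw [Λ.deg_comp, he, (h.isAbsoluteSource huw hvw).deg_eq_zero g, add_zero]

theorem numPaths_u_u (h : Λ.HasThreeVertexSkeleton u v w) (huw : u ≠ w) (m n : ℕ) :
    Λ.numPaths u u ![m, n] = Λ.numPaths u u (gen 2 0) ^ m * Λ.numPaths u u (gen 2 1) ^ n := by
  induction m with
  | zero =>
    induction n with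
    | zero => simpa [vec_zero_zero] using Λ.numPaths_self_zero u
    | succ n ih =>
      rw [← vec_add_gen_one, Λ.numPaths_add_gen _ (h.eq_of_edge_to_u huw), ih]
      ring
  | succ m ih =>
    rw [← vec_add_gen_zero, Λ.numPaths_add_gen _ (h.eq_of_edge_to_u huw), ih]
    ring

theorem numPaths_u_v_succ (h : Λ.HasThreeVertexSkeleton u v w) (huw : u ≠ w) (hvw : v ≠ w)
    (n : ℕ) :
    Λ.numPaths u v ![0, n + 1] = Λ.numPaths u u (gen 2 1) ^ n * Λ.numPaths u v (gen 2 1) := by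
  rw [← vec_add_gen_one, Λ.numPaths_add_gen _ (h.eq_of_edge_to_v hvw), h.numPaths_u_u huw]
  ring

theorem numPaths_u_w_succ_fst (h : Λ.HasThreeVertexSkeleton u v w) (m n : ℕ) :
    Λ.numPaths u w ![m + 1, n] = Λ.numPaths u u ![m, n] * Λ.numPaths u w (gen 2 0) := by
  rw [← vec_add_gen_zero, Λ.numPaths_add_gen _ h.eq_of_edge_zero_to_w]

theorem numPaths_u_w_zero_succ (h : Λ.HasThreeVertexSkeleton u v w) (huw : u ≠ w) (hvw : v ≠ w)
    (n : ℕ) :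
    Λ.numPaths u w ![0, n + 1] = Λ.numPaths u v ![0, n] * Λ.numPaths v w (gen 2 1) := by
  rw [← vec_add_gen_one, Λ.numPaths_add_gen _ (h.eq_of_edge_one_to_w huw hvw)]

theorem hasSum_hom_u_w (h : Λ.HasThreeVertexSkeleton u v w) (hΛ : Λ.IsFinite) (huv : u ≠ v)
    (huw : u ≠ w) (hvw : v ≠ w) {d₁ d₂ a₂ b₁ b₂ : ℕ}
    (hd₁ : Λ.numPaths u u (gen 2 0) = d₁) (hd₂ : Λ.numPaths u u (gen 2 1) = d₂)
    (ha₂ : Λ.numPaths u v (gen 2 1) = a₂) (hb₁ : Λ.numPaths u w (gen 2 0) = b₁)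
    (hb₂ : Λ.numPaths v w (gen 2 1) = b₂) {q₁ q₂ : ℝ} (hq₁ : 0 ≤ q₁) (hq₂ : 0 ≤ q₂)
    (hx : d₁ * q₁ < 1) (hy : d₂ * q₂ < 1) :
    HasSum (fun f : Λ.Hom u w => q₁ ^ Λ.deg f 0 * q₂ ^ Λ.deg f 1)
      (b₁ * q₁ * ((1 - d₁ * q₁) * (1 - d₂ * q₂))⁻¹ + a₂ * b₂ * q₂ ^ 2 * (1 - d₂ * q₂)⁻¹) := by
  refine hasSum_deg_of_hasSum_numPaths hΛ (g := fun n => q₁ ^ n 0 * q₂ ^ n 1)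
    (fun n => by positivity) ((finTwoArrowEquiv ℕ).symm.hasSum_iff.mp ?_)
  refine hasSum_of_rows_geometric (fun p => by dsimp; positivity) (by positivity) hx
    (by positivity) hy (fun m n => ?_) ?_ ?_ (fun n => ?_) <;>
    simp only [Function.comp_apply, finTwoArrowEquiv_symm_apply, Matrix.cons_val_zero,
      Matrix.cons_val_one, Matrix.cons_val_fin_one]
  · rw [h.numPaths_u_w_succ_fst, h.numPaths_u_u huw, hd₁, hd₂, hb₁]
    push_cast
    ring
  · rw [vec_zero_zero, Λ.numPaths_zero_of_ne huw]
    simp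
  · rw [h.numPaths_u_w_zero_succ huw hvw 0, vec_zero_zero, Λ.numPaths_zero_of_ne huv]
    simp
  · rw [h.numPaths_u_w_zero_succ huw hvw, h.numPaths_u_v_succ huw hvw, hd₂, ha₂, hb₂]
    push_cast
    ring

end HasThreeVertexSkeleton

end KGraph

theorem statement6_general (Λ : KGraph 2) (hΛ : Λ.IsFinite)
    (u v w : Λ.Obj) (huv : u ≠ v) (huw : u ≠ w) (hvw : v ≠ w)
    (hall : ∀ x : Λ.Obj, x = u ∨ x = v ∨ x = w)
    (d₁ d₂ a₂ b₁ b₂ : ℕ)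
    (hcd₁ : {f : Λ.Hom u u | Λ.deg f = KGraph.gen 2 0}.ncard = d₁)
    (hcd₂ : {f : Λ.Hom u u | Λ.deg f = KGraph.gen 2 1}.ncard = d₂)
    (hca₂ : {f : Λ.Hom u v | Λ.deg f = KGraph.gen 2 1}.ncard = a₂)
    (hcb₁ : {f : Λ.Hom u w | Λ.deg f = KGraph.gen 2 0}.ncard = b₁)
    (hcb₂ : {f : Λ.Hom v w | Λ.deg f = KGraph.gen 2 1}.ncard = b₂)
    (hempty : ∀ (x y : Λ.Obj) (i : Fin 2) (f : Λ.Hom x y), Λ.deg f = KGraph.gen 2 i →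
      (x = u ∧ y = u) ∨ (x = u ∧ y = v) ∨ (x = u ∧ y = w ∧ i = 0) ∨
        (x = v ∧ y = w ∧ i = 1))
    (r : Fin 2 → ℝ) (β : ℝ)
    (hβr₁ : Real.log d₁ < β * r 0) (hβr₂ : Real.log d₂ < β * r 1) :
    HasSum
      (fun μ : Λ.PathTo w =>
        Real.exp (-(β * (r 0 * (Λ.deg μ.2 0 : ℝ) + r 1 * (Λ.deg μ.2 1 : ℝ)))))
      (1 + (b₂ : ℝ) * Real.exp (-(β * r 1)) +
        (b₁ : ℝ) * Real.exp (-(β * r 0)) *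
          ((1 - (d₁ : ℝ) * Real.exp (-(β * r 0))) *
            (1 - (d₂ : ℝ) * Real.exp (-(β * r 1))))⁻¹ +
        (a₂ : ℝ) * (b₂ : ℝ) * Real.exp (-(2 * (β * r 1))) *
          (1 - (d₂ : ℝ) * Real.exp (-(β * r 1)))⁻¹) := by
  set q₁ := Real.exp (-(β * r 0))
  set q₂ := Real.exp (-(β * r 1))
  have h : Λ.HasThreeVertexSkeleton u v w := hempty
  simp only [← KGraph.numPaths_eq_ncard] at hcd₁ hcd₂ hca₂ hcb₁ hcb₂
  have hwt : 0 ≤ fun n : Fin 2 → ℕ => q₁ ^ n 0 * q₂ ^ n 1 := fun n => by positivity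
  have hU := h.hasSum_hom_u_w hΛ huv huw hvw hcd₁ hcd₂ hca₂ hcb₁ hcb₂ (by positivity)
    (by positivity) (Real.mul_exp_neg_lt_one_of_log_lt d₁.cast_nonneg hβr₁)
    (Real.mul_exp_neg_lt_one_of_log_lt d₂.cast_nonneg hβr₂)
  have hV : HasSum (fun f : Λ.Hom v w => q₁ ^ Λ.deg f 0 * q₂ ^ Λ.deg f 1) (b₂ * q₂) := by
    have := KGraph.hasSum_deg_of_forall_deg_eq hΛ hwt (h.deg_eq_of_hom_v_w huv huw hvw)
    rw [hcb₂] at this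
    simpa [KGraph.gen] using this
  have hW : HasSum (fun f : Λ.Hom w w => q₁ ^ Λ.deg f 0 * q₂ ^ Λ.deg f 1) 1 := by
    simpa [KGraph.numPaths_self_zero] using
      KGraph.hasSum_deg_of_forall_deg_eq (y := w) hΛ hwt (h.isAbsoluteSource huw hvw).deg_eq_zero
  have hsum := hasSum_sigma_of_three_indices
    (f := fun μ : Λ.PathTo w => q₁ ^ Λ.deg μ.2 0 * q₂ ^ Λ.deg μ.2 1)
    (fun _ => by positivity) huv huw hvw hall hU hV hW
  convert hsum using 1
  · funext μ
    rw [← Real.exp_nat_mul, ← Real.exp_nat_mul, ← Real.exp_add]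
    ring_nf
  · rw [show -(2 * (β * r 1)) = -(β * r 1) + -(β * r 1) by ring, Real.exp_add]
    ring

/-- For the 2-graph with three vertices `u, v, w` (with `w` an absolute source),
the series `y_w = ∑_{μ ∈ Λw} e^{-βr·d(μ)}` converges with sum
`1 + b₂e^{-βr₂} + b₁e^{-βr₁}Δ⁻¹ + a₂b₂e^{-2βr₂}(1-d₂e^{-βr₂})⁻¹`, where
`Δ = (1-d₁e^{-βr₁})(1-d₂e^{-βr₂})`. -/
theorem statement6 (Λ : KGraph 2) (hΛ : Λ.IsFinite)
    (u v w : Λ.Obj) (huv : u ≠ v) (huw : u ≠ w) (hvw : v ≠ w)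
    (hall : ∀ x : Λ.Obj, x = u ∨ x = v ∨ x = w)
    (d₁ d₂ a₁ a₂ b₁ b₂ : ℕ)
    (hd₁ : 1 ≤ d₁) (hd₂ : 1 ≤ d₂) (ha₁ : 1 ≤ a₁) (ha₂ : 1 ≤ a₂)
    (hb₁ : 1 ≤ b₁) (hb₂ : 1 ≤ b₂)
    (hcd₁ : {f : Λ.Hom u u | Λ.deg f = KGraph.gen 2 0}.ncard = d₁)
    (hcd₂ : {f : Λ.Hom u u | Λ.deg f = KGraph.gen 2 1}.ncard = d₂)
    (hca₁ : {f : Λ.Hom u v | Λ.deg f = KGraph.gen 2 0}.ncard = a₁)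
    (hca₂ : {f : Λ.Hom u v | Λ.deg f = KGraph.gen 2 1}.ncard = a₂)
    (hcb₁ : {f : Λ.Hom u w | Λ.deg f = KGraph.gen 2 0}.ncard = b₁)
    (hcb₂ : {f : Λ.Hom v w | Λ.deg f = KGraph.gen 2 1}.ncard = b₂)
    (hempty : ∀ (x y : Λ.Obj) (i : Fin 2) (f : Λ.Hom x y), Λ.deg f = KGraph.gen 2 i →
      (x = u ∧ y = u) ∨ (x = u ∧ y = v) ∨ (x = u ∧ y = w ∧ i = 0) ∨
        (x = v ∧ y = w ∧ i = 1))
    (r : Fin 2 → ℝ) (hr : ∀ i, 0 < r i) (β : ℝ) (hβ : 0 < β)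
    (hβr₁ : Real.log d₁ < β * r 0) (hβr₂ : Real.log d₂ < β * r 1) :
    HasSum
      (fun μ : Λ.PathTo w =>
        Real.exp (-(β * (r 0 * (Λ.deg μ.2 0 : ℝ) + r 1 * (Λ.deg μ.2 1 : ℝ)))))
      (1 + (b₂ : ℝ) * Real.exp (-(β * r 1)) +
        (b₁ : ℝ) * Real.exp (-(β * r 0)) *
          ((1 - (d₁ : ℝ) * Real.exp (-(β * r 0))) *
            (1 - (d₂ : ℝ) * Real.exp (-(β * r 1))))⁻¹ +
        (a₂ : ℝ) * (b₂ : ℝ) * Real.exp (-(2 * (β * r 1))) *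
          (1 - (d₂ : ℝ) * Real.exp (-(β * r 1)))⁻¹) :=
  statement6_general Λ hΛ u v w huv huw hvw hall d₁ d₂ a₂ b₁ b₂ hcd₁ hcd₂ hca₂ hcb₁ hcb₂ hempty r β
    hβr₁ hβr₂
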